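/- Let V and H be separable real Hilbert spaces with V densely embedded in H, and B : V → H a bounded linear operator satisfying |⟨x, Bx⟩| ≤ K‖x‖_H² for all x ∈ V. Then there exist a bounded operator S : V → H that is skew-symmetric (⟨x, Sy⟩ = −⟨y, Sx⟩ for all x, y ∈ V) and a bounded symmetric operator T : H → H such that B = S + T on V. -/
import Mathlib
set_option maxHeartbeats 1000000

open scoped RealInnerProductSpace


theorem aux_extend_along {V H F : Type*} [NormedAddCommGroup V] [NormedSpace ℝ V]
    [NormedAddCommGroup H] [NormedSpace ℝ H]
    [NormedAddCommGroup F] [NormedSpace ℝ F] [CompleteSpace F]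
    (J : V →L[ℝ] H) (hJ : DenseRange J) (A : V →L[ℝ] F) (C : ℝ) (hC : 0 ≤ C)
    (hA : ∀ y, ‖A y‖ ≤ C * ‖J y‖) :
    ∃ T : H →L[ℝ] F, (∀ y, T (J y) = A y) ∧ ∀ h, ‖T h‖ ≤ C * ‖h‖ := by
  have A_eq : ∀ y z : V, J y = J z → A y = A z := by
    intro y z h
    have h1 : ‖A (y - z)‖ ≤ C * ‖J (y - z)‖ := hA _
    rw [map_sub, map_sub, h, sub_self, norm_zero, mul_zero] at h1
    have := norm_eq_zero.mp (le_antisymm h1 (norm_nonneg _))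
    exact sub_eq_zero.mp this
  set s : Set H := Set.range J with hs
  have ds : Dense s := hJ
  have ue : IsUniformInducing (Subtype.val : s → H) :=
    isUniformEmbedding_subtype_val.isUniformInducing
  have dr : DenseRange (Subtype.val : s → H) := ds.denseRange_val
  set g : s → F := fun p => A p.2.choose with hg
  have hgs : ∀ p : s, J p.2.choose = (p : H) := fun p => p.2.choose_spec
  have glip : LipschitzWith (Real.toNNReal C) g := by
    apply LipschitzWith.of_dist_le_mul
    intro p q
    rw [Subtype.dist_eq, dist_eq_norm, dist_eq_norm, Real.coe_toNNReal C hC]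
    calc ‖g p - g q‖ = ‖A (p.2.choose - q.2.choose)‖ := by rw [map_sub]
      _ ≤ C * ‖J (p.2.choose - q.2.choose)‖ := hA _
      _ = C * ‖(p : H) - (q : H)‖ := by rw [map_sub, hgs, hgs]
  have ucg : UniformContinuous g := glip.uniformContinuous
  set T0 : H → F := (ue.isDenseInducing dr).extend g with hT0def
  have ucT0 : UniformContinuous T0 := uniformContinuous_uniformly_extend ue dr ucg
  have contT0 : Continuous T0 := ucT0.continuous
  have hT0e : ∀ p : s, T0 (p : H) = g p := fun p => uniformly_extend_of_ind ue dr ucg p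
  have hT0J : ∀ y : V, T0 (J y) = A y := by
    intro y
    have hmem : J y ∈ s := ⟨y, rfl⟩
    have := hT0e ⟨J y, hmem⟩
    rw [this, hg]
    exact A_eq _ _ (hgs ⟨J y, hmem⟩)
  have hadd : ∀ a b : H, T0 (a + b) = T0 a + T0 b := by
    have : (fun p : H × H => T0 (p.1 + p.2)) = fun p : H × H => T0 p.1 + T0 p.2 := by
      apply Continuous.ext_on (ds.prod ds)
      · exact contT0.comp (continuous_fst.add continuous_snd)
      · exact (contT0.comp continuous_fst).add (contT0.comp continuous_snd)
      · rintro ⟨h1, h2⟩ ⟨⟨y1, rfl⟩, ⟨y2, rfl⟩⟩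
        show T0 (J y1 + J y2) = T0 (J y1) + T0 (J y2)
        rw [← map_add, hT0J, hT0J, hT0J, map_add]
    intro a b
    exact congrFun this (a, b)
  have hsmul : ∀ (c : ℝ) (a : H), T0 (c • a) = c • T0 a := by
    intro c
    have : (fun h : H => T0 (c • h)) = fun h : H => c • T0 h := by
      apply Continuous.ext_on ds
      · exact contT0.comp (continuous_const.smul continuous_id)
      · exact contT0.const_smul c
      · rintro h ⟨y, rfl⟩
        show T0 (c • J y) = c • T0 (J y)
        rw [← map_smul, hT0J, hT0J, map_smul]
    exact fun a => congrFun this a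
  have hbound : ∀ h : H, ‖T0 h‖ ≤ C * ‖h‖ := by
    have hcl : IsClosed {h : H | ‖T0 h‖ ≤ C * ‖h‖} :=
      isClosed_le (contT0.norm) (continuous_const.mul continuous_norm)
    have hsub : s ⊆ {h : H | ‖T0 h‖ ≤ C * ‖h‖} := by
      rintro h ⟨y, rfl⟩
      simp only [Set.mem_setOf_eq, hT0J]
      exact hA y
    intro h
    have : closure s ⊆ {h : H | ‖T0 h‖ ≤ C * ‖h‖} := hcl.closure_subset_iff.mpr hsub
    exact this (by rw [ds.closure_eq]; trivial)
  refine ⟨LinearMap.mkContinuous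
    { toFun := T0, map_add' := hadd, map_smul' := hsmul } C hbound, hT0J, hbound⟩

section Aux

variable {V H : Type*} [NormedAddCommGroup V] [InnerProductSpace ℝ V]
    [NormedAddCommGroup H] [InnerProductSpace ℝ H] [CompleteSpace H]

theorem aux_eq_of_inner_J (J : V →L[ℝ] H) (hJ : DenseRange J) (u v : H)
    (h : ∀ x : V, (⟪u, J x⟫ : ℝ) = ⟪v, J x⟫) : u = v := by
  have ds : Dense (Set.range J) := hJ
  have : (fun h' : H => (⟪u, h'⟫ : ℝ)) = fun h' : H => (⟪v, h'⟫ : ℝ) := by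
    apply Continuous.ext_on ds (continuous_const.inner continuous_id)
      (continuous_const.inner continuous_id)
    rintro h' ⟨x, rfl⟩
    exact h x
  have h2 : (⟪u - v, u - v⟫ : ℝ) = 0 := by
    have hu := congrFun this (u - v)
    simp only [inner_sub_left] at *
    linarith
  exact sub_eq_zero.mp (inner_self_eq_zero.mp h2)

theorem aux_norm_le_of_inner_J (J : V →L[ℝ] H) (hJ : DenseRange J) (u : H) (c : ℝ) (hc : 0 ≤ c)
    (h : ∀ x : V, |(⟪J x, u⟫ : ℝ)| ≤ c * ‖J x‖) : ‖u‖ ≤ c := by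
  have ds : Dense (Set.range J) := hJ
  have hcl : IsClosed {h' : H | |(⟪h', u⟫ : ℝ)| ≤ c * ‖h'‖} :=
    isClosed_le ((continuous_id.inner continuous_const).abs)
      (continuous_const.mul continuous_norm)
  have hsub : Set.range J ⊆ {h' : H | |(⟪h', u⟫ : ℝ)| ≤ c * ‖h'‖} := by
    rintro h' ⟨x, rfl⟩; exact h x
  have hu : |(⟪u, u⟫ : ℝ)| ≤ c * ‖u‖ :=
    (hcl.closure_subset_iff.mpr hsub) (by rw [ds.closure_eq]; trivial)
  rw [real_inner_self_eq_norm_sq, abs_of_nonneg (by positivity)] at hu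
  rcases eq_or_lt_of_le (norm_nonneg u) with h0 | h0
  · rw [← h0]; exact hc
  · nlinarith

end Aux

/-- A quasi-skew-symmetric bounded operator `B : V → H` (through the dense
embedding `J : V → H`) decomposes as a skew-symmetric operator `S : V → H`
plus a bounded symmetric operator `T : H → H`. -/
theorem stmt1
    {V H : Type*} [NormedAddCommGroup V] [InnerProductSpace ℝ V]
    [NormedAddCommGroup H] [InnerProductSpace ℝ H] [CompleteSpace H]
    (J : V →L[ℝ] H) (hJ : DenseRange J)
    (B : V →L[ℝ] H) (K : ℝ)
    (hB : ∀ x : V, |(⟪J x, B x⟫ : ℝ)| ≤ K * ‖J x‖ ^ 2) :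
    ∃ (S : V →L[ℝ] H) (T : H →L[ℝ] H),
      (∀ x y : V, (⟪J x, S y⟫ : ℝ) = -⟪J y, S x⟫) ∧
      (∀ x y : H, (⟪x, T y⟫ : ℝ) = ⟪y, T x⟫) ∧
      ∀ x : V, B x = S x + T (J x) := by
  set K' : ℝ := max K 0 with hK'def
  have hK' : 0 ≤ K' := le_max_right K 0
  have hB' : ∀ x : V, |(⟪J x, B x⟫ : ℝ)| ≤ K' * ‖J x‖ ^ 2 := by
    intro x
    refine (hB x).trans ?_
    have : K ≤ K' := le_max_left K 0
    nlinarith [sq_nonneg ‖J x‖]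
  -- polarization bound
  have hb1 : ∀ x y : V, |(⟪J x, B y⟫ : ℝ) + ⟪J y, B x⟫| ≤ K' * (‖J x‖ ^ 2 + ‖J y‖ ^ 2) := by
    intro x y
    have h1 := abs_le.mp (hB' (x + y))
    have h2 := abs_le.mp (hB' (x - y))
    have e1 : (⟪J (x + y), B (x + y)⟫ : ℝ)
        = ⟪J x, B x⟫ + ⟪J x, B y⟫ + ⟪J y, B x⟫ + ⟪J y, B y⟫ := by
      simp [map_add, inner_add_left, inner_add_right]; ring
    have e2 : (⟪J (x - y), B (x - y)⟫ : ℝ)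
        = ⟪J x, B x⟫ - ⟪J x, B y⟫ - ⟪J y, B x⟫ + ⟪J y, B y⟫ := by
      simp [map_sub, inner_sub_left, inner_sub_right]; ring
    have par : K' * (‖J (x + y)‖ ^ 2 + ‖J (x - y)‖ ^ 2)
        = K' * (2 * ‖J x‖ ^ 2 + 2 * ‖J y‖ ^ 2) := by
      rw [map_add, map_sub, norm_add_sq_real, norm_sub_sq_real]; ring
    rw [e1] at h1
    rw [e2] at h2
    rw [abs_le]
    constructor <;> nlinarith [h1.1, h1.2, h2.1, h2.2]
  -- scaling
  have hb2 : ∀ (x y : V) (u : ℝ), 0 < u →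
      |(⟪J x, B y⟫ : ℝ) + ⟪J y, B x⟫| ≤ K' * (u * ‖J x‖ ^ 2 + ‖J y‖ ^ 2 / u) := by
    intro x y u hu
    have ht : Real.sqrt u > 0 := Real.sqrt_pos.mpr hu
    have ht2 : Real.sqrt u ^ 2 = u := Real.sq_sqrt hu.le
    have := hb1 (Real.sqrt u • x) ((Real.sqrt u)⁻¹ • y)
    have hinner : (⟪J (Real.sqrt u • x), B ((Real.sqrt u)⁻¹ • y)⟫ : ℝ)
        + ⟪J ((Real.sqrt u)⁻¹ • y), B (Real.sqrt u • x)⟫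
        = ⟪J x, B y⟫ + ⟪J y, B x⟫ := by
      rw [map_smul, map_smul, map_smul, map_smul]
      rw [real_inner_smul_left, real_inner_smul_left, real_inner_smul_right,
        real_inner_smul_right]
      field_simp
    have hn1 : ‖J (Real.sqrt u • x)‖ ^ 2 = u * ‖J x‖ ^ 2 := by
      rw [map_smul, norm_smul, Real.norm_eq_abs, abs_of_pos ht, mul_pow, ht2]
    have hn2 : ‖J ((Real.sqrt u)⁻¹ • y)‖ ^ 2 = ‖J y‖ ^ 2 / u := by
      rw [map_smul, norm_smul, Real.norm_eq_abs, abs_of_pos (inv_pos.mpr ht), mul_pow,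
        inv_pow, ht2]
      ring
    rw [hinner, hn1, hn2] at this
    exact this
  -- final bound
  have hb : ∀ x y : V, |(⟪J x, B y⟫ : ℝ) + ⟪J y, B x⟫| ≤ 2 * K' * ‖J x‖ * ‖J y‖ := by
    intro x y
    set a := ‖J x‖ with ha
    set b := ‖J y‖ with hbdef
    have ha0 : 0 ≤ a := norm_nonneg _
    have hb0 : 0 ≤ b := norm_nonneg _
    have key : ∀ ε : ℝ, 0 < ε →
        |(⟪J x, B y⟫ : ℝ) + ⟪J y, B x⟫| ≤ 2 * K' * (a + ε) * (b + ε) := by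
      intro ε hε
      have hap : 0 < a + ε := by positivity
      have hbp : 0 < b + ε := by positivity
      have hu : 0 < (b + ε) / (a + ε) := by positivity
      refine (hb2 x y _ hu).trans ?_
      have h1 : (b + ε) / (a + ε) * a ^ 2 ≤ (a + ε) * (b + ε) := by
        rw [div_mul_eq_mul_div, div_le_iff₀ hap]
        have hsq : a ^ 2 ≤ (a + ε) ^ 2 := by nlinarith
        nlinarith [mul_le_mul_of_nonneg_left hsq hbp.le]
      have h2 : b ^ 2 / ((b + ε) / (a + ε)) ≤ (a + ε) * (b + ε) := by
        rw [div_div_eq_mul_div, div_le_iff₀ hbp]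
        have hsq : b ^ 2 ≤ (b + ε) ^ 2 := by nlinarith
        nlinarith [mul_le_mul_of_nonneg_left hsq hap.le]
      nlinarith [mul_le_mul_of_nonneg_left (add_le_add h1 h2) hK']
    have tnd : Filter.Tendsto (fun ε : ℝ => 2 * K' * (a + ε) * (b + ε))
        (nhdsWithin 0 (Set.Ioi 0)) (nhds (2 * K' * a * b)) := by
      have hc : Continuous fun ε : ℝ => 2 * K' * (a + ε) * (b + ε) := by continuity
      have h2 := (hc.tendsto 0).mono_left (nhdsWithin_le_nhds (s := Set.Ioi (0 : ℝ)))
      simpa using h2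
    exact ge_of_tendsto tnd (Filter.eventually_of_mem self_mem_nhdsWithin
      fun ε hε => key ε hε)
  -- the skew part functional
  set ℓ : V → V →L[ℝ] ℝ := fun y =>
    (1 / 2 : ℝ) • (((innerSL ℝ (B y)).comp J) - ((innerSL ℝ (J y)).comp B)) with hℓ
  have hℓval : ∀ x y : V, ℓ y x = ((⟪J x, B y⟫ : ℝ) - ⟪J y, B x⟫) / 2 := by
    intro x y
    simp [hℓ, innerSL_apply_apply, real_inner_comm (B y) (J x)]
    ring
  have hℓbound : ∀ y x : V, ‖ℓ y x‖ ≤ (‖B y‖ + K' * ‖J y‖) * ‖J x‖ := by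
    intro y x
    rw [hℓval, Real.norm_eq_abs]
    have h1 : |(⟪J x, B y⟫ : ℝ)| ≤ ‖J x‖ * ‖B y‖ := abs_real_inner_le_norm _ _
    have h2 := hb x y
    have h3 : |((⟪J x, B y⟫ : ℝ) - ⟪J y, B x⟫) / 2|
        ≤ |(⟪J x, B y⟫ : ℝ)| + |(⟪J x, B y⟫ : ℝ) + ⟪J y, B x⟫| / 2 := by
      have heq : ((⟪J x, B y⟫ : ℝ) - ⟪J y, B x⟫) / 2
          = (⟪J x, B y⟫ : ℝ) - ((⟪J x, B y⟫ : ℝ) + ⟪J y, B x⟫) / 2 := by ring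
      rw [heq]
      have h4 : |(⟪J x, B y⟫ : ℝ) - ((⟪J x, B y⟫ : ℝ) + ⟪J y, B x⟫) / 2|
          ≤ |(⟪J x, B y⟫ : ℝ)| + |((⟪J x, B y⟫ : ℝ) + ⟪J y, B x⟫) / 2| := by
        simpa [sub_eq_add_neg, abs_neg] using
          abs_add_le (⟪J x, B y⟫ : ℝ) (-(((⟪J x, B y⟫ : ℝ) + ⟪J y, B x⟫) / 2))
      rw [abs_div] at h4
      simpa using h4
    nlinarith
  -- build the Riesz representatives of the skew part
  have hCy : ∀ y : V, (0 : ℝ) ≤ ‖B y‖ + K' * ‖J y‖ := by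
    intro y; positivity
  have hphi : ∀ y : V, ∃ φ : H →L[ℝ] ℝ, (∀ x : V, φ (J x) = ℓ y x) ∧
      ∀ h : H, ‖φ h‖ ≤ (‖B y‖ + K' * ‖J y‖) * ‖h‖ := by
    intro y
    exact aux_extend_along J hJ (ℓ y) (‖B y‖ + K' * ‖J y‖) (hCy y)
      (fun x => hℓbound y x)
  set Sfun : V → H := fun y =>
    (InnerProductSpace.toDual ℝ H).symm (hphi y).choose with hSfun
  have hSchar : ∀ (y : V) (h : H), (⟪Sfun y, h⟫ : ℝ) = (hphi y).choose h := by
    intro y h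
    exact InnerProductSpace.toDual_symm_apply (E := H) (𝕜 := ℝ)
  have hSJ : ∀ x y : V, (⟪Sfun y, J x⟫ : ℝ) = ((⟪J x, B y⟫ : ℝ) - ⟪J y, B x⟫) / 2 := by
    intro x y
    rw [hSchar, (hphi y).choose_spec.1 x, hℓval]
  have hSadd : ∀ y z : V, Sfun (y + z) = Sfun y + Sfun z := by
    intro y z
    apply aux_eq_of_inner_J J hJ
    intro x
    rw [hSJ, inner_add_left, hSJ, hSJ, map_add, map_add, inner_add_right, inner_add_left]
    ring
  have hSsmul : ∀ (c : ℝ) (y : V), Sfun (c • y) = c • Sfun y := by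
    intro c y
    apply aux_eq_of_inner_J J hJ
    intro x
    rw [hSJ, real_inner_smul_left, hSJ, map_smul, map_smul, real_inner_smul_right,
      real_inner_smul_left]
    ring
  have hSbound : ∀ y : V, ‖Sfun y‖ ≤ (‖B‖ + K' * ‖J‖) * ‖y‖ := by
    intro y
    have h1 : ∀ h : H, |(⟪Sfun y, h⟫ : ℝ)| ≤ (‖B y‖ + K' * ‖J y‖) * ‖h‖ := by
      intro h
      rw [hSchar]
      exact (hphi y).choose_spec.2 h
    have h2 : ‖Sfun y‖ ^ 2 ≤ (‖B y‖ + K' * ‖J y‖) * ‖Sfun y‖ := by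
      have := h1 (Sfun y)
      rwa [real_inner_self_eq_norm_sq, abs_of_nonneg (by positivity)] at this
    have h3 : ‖Sfun y‖ ≤ ‖B y‖ + K' * ‖J y‖ := by
      rcases eq_or_lt_of_le (norm_nonneg (Sfun y)) with h0 | h0
      · rw [← h0]; exact hCy y
      · nlinarith
    refine h3.trans ?_
    have hby : ‖B y‖ ≤ ‖B‖ * ‖y‖ := B.le_opNorm y
    have hjy : ‖J y‖ ≤ ‖J‖ * ‖y‖ := J.le_opNorm y
    have := mul_le_mul_of_nonneg_left hjy hK'
    nlinarith
  set S : V →L[ℝ] H := LinearMap.mkContinuous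
    { toFun := Sfun, map_add' := hSadd, map_smul' := hSsmul }
    (‖B‖ + K' * ‖J‖) hSbound with hS
  have hSapp : ∀ y : V, S y = Sfun y := fun y => rfl
  -- the symmetric part on V
  set T1 : V →L[ℝ] H := B - S with hT1
  have hT1J : ∀ x y : V, (⟪J x, T1 y⟫ : ℝ)
      = ((⟪J x, B y⟫ : ℝ) + ⟪J y, B x⟫) / 2 := by
    intro x y
    rw [hT1]
    simp only [ContinuousLinearMap.sub_apply, inner_sub_right]
    have h5 : (⟪J x, Sfun y⟫ : ℝ) = ((⟪J x, B y⟫ : ℝ) - ⟪J y, B x⟫) / 2 := by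
      rw [real_inner_comm]; exact hSJ x y
    rw [hSapp, h5]
    ring
  have hT1bound : ∀ y : V, ‖T1 y‖ ≤ K' * ‖J y‖ := by
    intro y
    apply aux_norm_le_of_inner_J J hJ _ _ (by positivity)
    intro x
    rw [hT1J]
    have := hb x y
    rw [abs_div]
    rw [abs_of_nonneg (by norm_num : (0:ℝ) ≤ 2)]
    nlinarith [norm_nonneg (J x), norm_nonneg (J y)]
  obtain ⟨T, hTJ, hTbound⟩ := aux_extend_along J hJ T1 K' hK' hT1bound
  refine ⟨S, T, ?_, ?_, ?_⟩
  · intro x y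
    have hxy : (⟪J x, S y⟫ : ℝ) = ((⟪J x, B y⟫ : ℝ) - ⟪J y, B x⟫) / 2 := by
      rw [hSapp, real_inner_comm]; exact hSJ x y
    have hyx : (⟪J y, S x⟫ : ℝ) = ((⟪J y, B x⟫ : ℝ) - ⟪J x, B y⟫) / 2 := by
      rw [hSapp, real_inner_comm]; exact hSJ y x
    rw [hxy, hyx]; ring
  · -- symmetry of T by density
    have ds : Dense (Set.range J) := hJ
    have : (fun p : H × H => (⟪p.1, T p.2⟫ : ℝ)) = fun p : H × H => (⟪p.2, T p.1⟫ : ℝ) := by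
      apply Continuous.ext_on (ds.prod ds)
      · exact continuous_fst.inner (T.continuous.comp continuous_snd)
      · exact continuous_snd.inner (T.continuous.comp continuous_fst)
      · rintro ⟨h1, h2⟩ ⟨⟨x, rfl⟩, ⟨y, rfl⟩⟩
        show (⟪J x, T (J y)⟫ : ℝ) = ⟪J y, T (J x)⟫
        rw [hTJ, hTJ, hT1J, hT1J]
        ring
    intro x y
    exact congrFun this (x, y)
  · intro x
    rw [hTJ]
    rw [hT1]
    simp
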